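/- Let $B = C_1 \times C_2 \times \dots \times C_s$ be a direct product of cyclic groups with $s > 1$, and let $A$ be a subgroup of $B$ of prime order $p$ such that $A \cap C_i = 1$ for all $i$ (viewing each $C_i$ as a subgroup of $B$). Then the exponent of $B/A$ equals the exponent of $B$. -/
import Mathlib

/-- If `B = C₁ × ⋯ × C_s` (`s > 1`) is a product of finite cyclic groups and `A ≤ B` has
prime order `p` with `A ∩ Cᵢ = 1` for all `i`, then `exp(B/A) = exp(B)`. -/
theorem stmt_0 {ι : Type*} [Fintype ι] [DecidableEq ι] (hs : 1 < Fintype.card ι)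
    (C : ι → Type*) [∀ i, CommGroup (C i)] [∀ i, Finite (C i)] [∀ i, IsCyclic (C i)]
    (A : Subgroup (∀ i, C i)) (p : ℕ) (hp : p.Prime) (hA : Nat.card A = p)
    (hAi : ∀ i, A ⊓ (MonoidHom.mulSingle C i).range = ⊥) :
    Monoid.exponent ((∀ i, C i) ⧸ A) = Monoid.exponent (∀ i, C i) := by
  refine Nat.dvd_antisymm
    (MonoidHom.exponent_dvd (f := QuotientGroup.mk' A) (QuotientGroup.mk'_surjective A)) ?_
  set n := Monoid.exponent ((∀ i, C i) ⧸ A) with hn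
  refine Monoid.exponent_dvd_of_forall_pow_eq_one fun g => ?_
  funext i
  have h1 : (MonoidHom.mulSingle C i (g i)) ^ n ∈ A := by
    rw [← QuotientGroup.eq_one_iff, QuotientGroup.mk_pow]
    exact Monoid.pow_exponent_eq_one _
  have h2 : (MonoidHom.mulSingle C i (g i)) ^ n ∈ (MonoidHom.mulSingle C i).range := by
    rw [← map_pow]; exact ⟨_, rfl⟩
  have h3 : (MonoidHom.mulSingle C i (g i)) ^ n = 1 := by
    have := hAi i ▸ (Subgroup.mem_inf.mpr ⟨h1, h2⟩)
    simpa using this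
  have := congrFun h3 i
  simpa using this
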